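/- arXiv:1808.04830 — 2 statements merged into one kernel-verified Lean document; each statement's English description precedes it below -/
import Mathlib

section
/- Let z = re^{iθ} ∈ 𝔻 with e^{−π/6} ≤ r < 1, and let γ₁, γ₄ be the arcs associated with z. Then the harmonic measure satisfies ω(z, γ_j, 𝔻) = (1/(2π)) ∫_{γ_j} (1−|z|²)/|ζ−z|² |dζ| ≥ 1/(30π) for j = 1, 4. -/
/-!
Write `z = r e^{iθ}` and `δ = log (1/r)`, so that `1 - r ≤ δ ≤ (1 - r) / r`. On the arcs
`|t - θ| ≤ 2δ` the Poisson kernel has denominator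
`|e^{it} - z|² = (1 - r)² + 2r(1 - cos (t - θ)) ≤ δ² + (t - θ)² ≤ 5δ²`,
while its numerator is `1 - r² ≥ 1 - r ≥ rδ ≥ δ/3` once `r ≥ 1/3`,
which holds since `e^{-π/6} ≥ 1 - π/6 ≥ 1/3`.
So the kernel is at least `1/(15δ)` on each arc, and the arcs have length `δ`.
-/

open Complex Metric Set Real MeasureTheory

lemma poissonKernel_zero_exp_mul_I (w : ℂ) (t : ℝ) :
    poissonKernel 0 w (cexp (t * I)) = (1 - ‖w‖ ^ 2) / ‖cexp (t * I) - w‖ ^ 2 := by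
  simp only [poissonKernel_def, sub_zero, norm_exp_ofReal_mul_I, one_pow]

lemma continuous_poissonKernel_zero_exp_mul_I {w : ℂ} (hw : ‖w‖ < 1) :
    Continuous fun t : ℝ => poissonKernel 0 w (cexp (t * I)) := by
  simp only [poissonKernel_zero_exp_mul_I]
  refine continuous_const.div (by fun_prop) fun t => pow_ne_zero 2 (norm_ne_zero_iff.mpr ?_)
  intro h
  have := congrArg norm (sub_eq_zero.mp h)
  rw [norm_exp_ofReal_mul_I] at this
  linarith

lemma norm_ofReal_mul_exp_mul_I {r : ℝ} (hr : 0 ≤ r) (θ : ℝ) :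
    ‖(r : ℂ) * cexp (θ * I)‖ = r := by
  rw [norm_mul, norm_exp_ofReal_mul_I, mul_one, Complex.norm_of_nonneg hr]

lemma norm_exp_mul_I_sub_sq (r θ t : ℝ) :
    ‖cexp (t * I) - r * cexp (θ * I)‖ ^ 2 = (1 - r) ^ 2 + 2 * r * (1 - Real.cos (t - θ)) := by
  have hfac : cexp (t * I) - r * cexp (θ * I)
      = (cexp ((t - θ : ℝ) * I) - r) * cexp (θ * I) := by
    rw [sub_mul, ← Complex.exp_add]
    push_cast
    ring_nf
  rw [hfac, norm_mul, norm_exp_ofReal_mul_I, mul_one, ← normSq_eq_norm_sq, normSq_apply]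
  simp only [sub_re, sub_im, exp_ofReal_mul_I_re, exp_ofReal_mul_I_im, ofReal_re, ofReal_im]
  nlinarith [Real.sin_sq_add_cos_sq (t - θ)]

lemma one_sub_le_log_one_div {r : ℝ} (hr : 0 < r) : 1 - r ≤ Real.log (1 / r) := by
  simpa using Real.one_sub_inv_le_log_of_pos (one_div_pos.mpr hr)

lemma mul_log_one_div_le_one_sub {r : ℝ} (hr : 0 < r) : r * Real.log (1 / r) ≤ 1 - r :=
  calc r * Real.log (1 / r) ≤ r * (1 / r - 1) :=
        mul_le_mul_of_nonneg_left (Real.log_le_sub_one_of_pos (one_div_pos.mpr hr)) hr.le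
    _ = 1 - r := by field_simp

lemma one_third_le_exp_neg_pi_div_six : (1 : ℝ) / 3 ≤ Real.exp (-(π / 6)) := by
  linarith [Real.add_one_le_exp (-(π / 6)), Real.pi_le_four]

lemma one_div_fifteen_mul_log_le_poissonKernel {r θ t : ℝ} (hr1 : 1 / 3 ≤ r) (hr2 : r < 1)
    (ht : |t - θ| ≤ 2 * Real.log (1 / r)) :
    1 / (15 * Real.log (1 / r)) ≤ poissonKernel 0 (r * cexp (θ * I)) (cexp (t * I)) := by
  set δ := Real.log (1 / r)
  have hr : 0 < r := by linarith
  have hδ : 0 < δ := Real.log_pos (one_lt_one_div hr hr2)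
  rw [poissonKernel_zero_exp_mul_I, norm_ofReal_mul_exp_mul_I hr.le, norm_exp_mul_I_sub_sq]
  have hnum : δ / 3 ≤ 1 - r ^ 2 := by nlinarith [mul_log_one_div_le_one_sub hr]
  have hcos : 2 * (1 - Real.cos (t - θ)) ≤ (t - θ) ^ 2 := by
    linarith [Real.one_sub_sq_div_two_le_cos (x := t - θ)]
  have hsq : (t - θ) ^ 2 ≤ (2 * δ) ^ 2 := by
    simpa only [sq_abs] using pow_le_pow_left₀ (abs_nonneg _) ht 2
  have hden_pos : 0 < (1 - r) ^ 2 + 2 * r * (1 - Real.cos (t - θ)) := by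
    have : 0 ≤ 1 - Real.cos (t - θ) := sub_nonneg.mpr (Real.cos_le_one _)
    have : 0 < (1 - r) ^ 2 := by nlinarith
    positivity
  have hden : (1 - r) ^ 2 + 2 * r * (1 - Real.cos (t - θ)) ≤ 5 * δ ^ 2 := by
    have h1r : 1 - r ≤ δ := one_sub_le_log_one_div hr
    nlinarith [sq_nonneg (t - θ)]
  calc 1 / (15 * δ) = (δ / 3) / (5 * δ ^ 2) := by field_simp; ring
    _ ≤ _ := div_le_div₀ (by linarith) hnum hden_pos hden

lemma one_div_fifteen_le_integral_poissonKernel {r θ a b : ℝ} (hr1 : 1 / 3 ≤ r) (hr2 : r < 1)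
    (hab : b - a = Real.log (1 / r)) (hmem : ∀ t ∈ Icc a b, |t - θ| ≤ 2 * Real.log (1 / r)) :
    1 / 15 ≤ ∫ t in a..b, poissonKernel 0 (r * cexp (θ * I)) (cexp (t * I)) := by
  have hr : 0 < r := by linarith
  have hδ : 0 < Real.log (1 / r) := Real.log_pos (one_lt_one_div hr hr2)
  have hz : ‖(r : ℂ) * cexp (θ * I)‖ < 1 := by
    rwa [norm_ofReal_mul_exp_mul_I hr.le]
  have hmono := intervalIntegral.integral_mono_on (by linarith)
    (intervalIntegrable_const (μ := volume))
    ((continuous_poissonKernel_zero_exp_mul_I hz).intervalIntegrable a b)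
    fun t ht => one_div_fifteen_mul_log_le_poissonKernel hr1 hr2 (hmem t ht)
  rw [intervalIntegral.integral_const, smul_eq_mul, hab] at hmono
  calc (1 : ℝ) / 15 = Real.log (1 / r) * (1 / (15 * Real.log (1 / r))) := by field_simp
    _ ≤ _ := hmono

lemma one_div_thirty_pi_le_integral_poissonKernel {r θ a b : ℝ} (hr1 : 1 / 3 ≤ r) (hr2 : r < 1)
    (hab : b - a = Real.log (1 / r)) (hmem : ∀ t ∈ Icc a b, |t - θ| ≤ 2 * Real.log (1 / r)) :
    1 / (30 * π) ≤
      (1 / (2 * π)) * ∫ t in a..b, poissonKernel 0 (r * cexp (θ * I)) (cexp (t * I)) :=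
  calc 1 / (30 * π) = (1 / (2 * π)) * (1 / 15) := by field_simp; ring
    _ ≤ _ := by
      gcongr
      exact one_div_fifteen_le_integral_poissonKernel hr1 hr2 hab hmem

/-- **Lemma 3.2 (lower harmonic measure bound, arcs γ₁, γ₄).**
For `z = r e^{iθ}` with `e^{−π/6} ≤ r < 1` and `δ = log(1/r)`, the harmonic measure of
each of the arcs `γ₁ = {e^{it} : θ−2δ ≤ t ≤ θ−δ}` and `γ₄ = {e^{it} : θ+δ ≤ t ≤ θ+2δ}`
at `z` in the unit disk, `ω(z,γⱼ,𝔻) = (1/2π)∫_{γⱼ} (1−|z|²)/|ζ−z|² |dζ|`,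
is at least `1/(30π)`. -/
theorem harmonic_measure_gamma14_lower (r θ : ℝ)
    (hr1 : Real.exp (-(π / 6)) ≤ r) (hr2 : r < 1) :
    1 / (30 * π) ≤ (1 / (2 * π)) *
      ∫ t in (θ - 2 * Real.log (1 / r))..(θ - Real.log (1 / r)),
        (1 - ‖(r : ℂ) * Complex.exp (θ * Complex.I)‖ ^ 2) /
          ‖Complex.exp (t * Complex.I) -
            (r : ℂ) * Complex.exp (θ * Complex.I)‖ ^ 2 ∧
    1 / (30 * π) ≤ (1 / (2 * π)) *
      ∫ t in (θ + Real.log (1 / r))..(θ + 2 * Real.log (1 / r)),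
        (1 - ‖(r : ℂ) * Complex.exp (θ * Complex.I)‖ ^ 2) /
          ‖Complex.exp (t * Complex.I) -
            (r : ℂ) * Complex.exp (θ * Complex.I)‖ ^ 2 := by
  have hr : 1 / 3 ≤ r := one_third_le_exp_neg_pi_div_six.trans hr1
  have hδ : 0 < Real.log (1 / r) := Real.log_pos (one_lt_one_div (by linarith) hr2)
  simp only [← poissonKernel_zero_exp_mul_I]
  constructor <;>
    refine one_div_thirty_pi_le_integral_poissonKernel hr hr2 (by ring)
      fun t ht => abs_le.mpr ⟨?_, ?_⟩ <;>
    linarith [ht.1, ht.2]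
end

section
/- Let ψ : 𝕋 → 𝕋 be a normalized circle homeomorphism. Let σ ⊂ 𝕋 be an arc of length π/3 such that the image arc ψ(σ) has length at least π/3, and let e^{iθ} be the midpoint of σ. Set z₀ = e^{−π/6}·e^{iθ} (so the associated δ equals π/6) and let γ₁ = {e^{it} : θ−π/3 ≤ t ≤ θ−π/6} and γ₄ = {e^{it} : θ+π/6 ≤ t ≤ θ+π/3} be the arcs associated with z₀. Then dist(ψ(γ₁), ψ(γ₄)) ≥ 1. -/
/-! The arc `[θ - π/3, θ + π/3]` has length `2π/3`, so by normalization `ψ` maps it into an arc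
of length `4π/3 < 2π`.  On that arc a branch of the argument lifts `ψ` to a continuous injective,
hence strictly monotone, real function `F` with `ψ (e^{it}) = e^{i F(t)}`.  The arc of length `π/3`
inside `ψ(σ)` gives points `u, v ∈ σ` with `F v - F u = π/3`.  Since `σ` separates `γ₁` from `γ₄`,
monotonicity gives `π/3 ≤ |F s - F t| ≤ 4π/3` for `s ∈ γ₁`, `t ∈ γ₄`, and the chord between
`e^{i F(s)}` and `e^{i F(t)}` has length `2 |sin ((F s - F t) / 2)| ≥ 1`. -/

open Complex Metric Set Real

/-- The closed arc of the unit circle `{e^{it} : a ≤ t ≤ b}`. -/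
noncomputable def arcCC (a b : ℝ) : Set ℂ :=
  (fun t : ℝ => Complex.exp (t * Complex.I)) '' Set.Icc a b

/-- A circle homeomorphism `ψ : 𝕋 → 𝕋` is *normalized* if the image of every arc of
length `2π/3` is an arc of length at most `4π/3` (equivalently, is contained in some
arc of length `4π/3`). -/
def IsNormalized (ψ : ℂ → ℂ) : Prop :=
  ∀ θ : ℝ, ∃ θ' : ℝ, ψ '' arcCC θ (θ + 2 * π / 3) ⊆ arcCC θ' (θ' + 4 * π / 3)

/-- Euclidean distance between two subsets of the plane. -/
noncomputable def setDist (A B : Set ℂ) : ℝ := sInf (Set.image2 dist A B)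

lemma le_setDist {A B : Set ℂ} {c : ℝ} (hA : A.Nonempty) (hB : B.Nonempty)
    (h : ∀ a ∈ A, ∀ b ∈ B, c ≤ dist a b) : c ≤ setDist A B :=
  le_csInf (hA.image2 hB) (forall_mem_image2.2 h)

lemma exp_mul_I_mem_sphere (t : ℝ) : cexp (t * I) ∈ sphere (0 : ℂ) 1 := by
  simp [norm_exp_ofReal_mul_I]

lemma exp_mul_I_injOn_Icc {a b : ℝ} (h : b - a < 2 * π) :
    InjOn (fun t : ℝ => cexp (t * I)) (Icc a b) := fun _ hs _ ht hst =>
  Circle.exp_injOn_Icc h hs ht (Circle.ext hst)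

lemma dist_exp_mul_I_exp_mul_I (s t : ℝ) :
    dist (cexp (s * I)) (cexp (t * I)) = 2 * |Real.sin ((s - t) / 2)| := by
  have hs : cexp (s * I) = cexp (t * I) * cexp (I * (s - t : ℝ)) := by
    rw [← Complex.exp_add]; push_cast; ring_nf
  rw [Complex.dist_eq, hs, ← mul_sub_one, norm_mul, norm_exp_ofReal_mul_I, one_mul,
    norm_exp_I_mul_ofReal_sub_one, norm_mul, Real.norm_two, Real.norm_eq_abs]

lemma one_le_two_mul_abs_sin_half {x : ℝ} (h₁ : π / 3 ≤ |x|) (h₂ : |x| ≤ 5 * π / 3) :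
    1 ≤ 2 * |Real.sin (x / 2)| := by
  have half_le_sin : ∀ y, π / 6 ≤ y → y ≤ π / 2 → 1 / 2 ≤ Real.sin y := fun y hy₁ hy₂ => by
    rw [← sin_pi_div_six]
    exact sin_le_sin_of_le_of_le_pi_div_two (by linarith [pi_pos]) hy₂ hy₁
  have habs : |Real.sin (x / 2)| = Real.sin (|x| / 2) := by
    have hsym : |Real.sin (x / 2)| = |Real.sin (|x| / 2)| := by
      rcases abs_cases x with ⟨hx, -⟩ | ⟨hx, -⟩
      · rw [hx]
      · rw [hx, neg_div, Real.sin_neg, abs_neg]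
    rw [hsym, abs_of_nonneg (sin_nonneg_of_nonneg_of_le_pi (by positivity) (by linarith))]
  rw [habs]
  rcases le_total (|x| / 2) (π / 2) with hx | hx
  · linarith [half_le_sin (|x| / 2) (by linarith) hx]
  · linarith [Real.sin_pi_sub (|x| / 2), half_le_sin (π - |x| / 2) (by linarith) (by linarith)]

/-- The branch of the argument with values in `(c - π, c + π]`. -/
noncomputable def shiftedArg (c : ℝ) (w : ℂ) : ℝ := c + arg (w * cexp (-c * I))

lemma exp_mul_I_mul_exp_neg_mul_I (t c : ℝ) :
    cexp (t * I) * cexp (-c * I) = cexp ((t - c : ℝ) * I) := by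
  rw [← Complex.exp_add]; push_cast; ring_nf

lemma arg_exp_mul_I_of_mem_Ioc {t : ℝ} (ht : t ∈ Ioc (-π) π) : arg (cexp (t * I)) = t :=
  Circle.arg_exp ht.1 ht.2

lemma shiftedArg_exp_mul_I {c t : ℝ} (ht : t ∈ Ioc (c - π) (c + π)) :
    shiftedArg c (cexp (t * I)) = t := by
  rw [shiftedArg, exp_mul_I_mul_exp_neg_mul_I,
    arg_exp_mul_I_of_mem_Ioc ⟨by linarith [ht.1], by linarith [ht.2]⟩]
  ring

lemma continuousAt_shiftedArg {c t : ℝ} (ht : t ∈ Ioo (c - π) (c + π)) :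
    ContinuousAt (shiftedArg c) (cexp (t * I)) := by
  have hslit : cexp (t * I) * cexp (-c * I) ∈ slitPlane := by
    rw [exp_mul_I_mul_exp_neg_mul_I, mem_slitPlane_iff_arg,
      arg_exp_mul_I_of_mem_Ioc ⟨by linarith [ht.1], by linarith [ht.2]⟩]
    exact ⟨by linarith [ht.2], Complex.exp_ne_zero _⟩
  exact continuousAt_const.add
    ((continuousAt_arg hslit).comp (f := (· * cexp (-c * I))) (continuous_mul_const _).continuousAt)

theorem exists_continuousOn_lift_of_mapsTo_arcCC {f : ℝ → ℂ} {s : Set ℝ} {a b : ℝ}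
    (hab : b - a < 2 * π) (hf : ContinuousOn f s) (hfs : MapsTo f s (arcCC a b)) :
    ∃ F : ℝ → ℝ, ContinuousOn F s ∧ MapsTo F s (Icc a b) ∧ ∀ x ∈ s, cexp (F x * I) = f x := by
  set c := (a + b) / 2 with hc
  have hlift : ∀ x ∈ s, ∃ t ∈ Icc a b, f x = cexp (t * I) ∧ t ∈ Ioo (c - π) (c + π) := by
    intro x hx
    obtain ⟨t, ht, hft⟩ := hfs hx
    exact ⟨t, ht, hft.symm, by constructor <;> linarith [ht.1, ht.2, hc]⟩
  refine ⟨shiftedArg c ∘ f, fun x hx => ?_, fun x hx => ?_, fun x hx => ?_⟩ <;>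
    obtain ⟨t, ht, hft, htc⟩ := hlift x hx
  · refine ContinuousAt.comp_continuousWithinAt ?_ (hf x hx)
    rw [hft]
    exact continuousAt_shiftedArg htc
  · simpa [hft, shiftedArg_exp_mul_I (Ioo_subset_Ioc_self htc)] using ht
  · simp [hft, shiftedArg_exp_mul_I (Ioo_subset_Ioc_self htc)]

lemma abs_sub_le_abs_sub_of_monotoneOn_or_antitoneOn {α : Type*} [Preorder α] {F : α → ℝ}
    {S : Set α} (hF : MonotoneOn F S ∨ AntitoneOn F S) {s t u v : α} (hs : s ∈ S) (ht : t ∈ S)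
    (hu : u ∈ S) (hv : v ∈ S) (hsu : s ≤ u) (hsv : s ≤ v) (hut : u ≤ t) (hvt : v ≤ t) :
    |F u - F v| ≤ |F s - F t| := by
  rcases hF with hF | hF
  · calc |F u - F v| ≤ F t - F s := abs_sub_le_iff.2
          ⟨by linarith [hF hs hv hsv, hF hu ht hut], by linarith [hF hs hu hsu, hF hv ht hvt]⟩
      _ ≤ |F s - F t| := abs_sub_comm (F t) (F s) ▸ le_abs_self _
  · calc |F u - F v| ≤ F s - F t := abs_sub_le_iff.2
          ⟨by linarith [hF hs hu hsu, hF hv ht hvt], by linarith [hF hs hv hsv, hF hu ht hut]⟩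
      _ ≤ |F s - F t| := le_abs_self _

theorem IsNormalized.exists_strictMonoOn_lift {ψ : ℂ → ℂ} (hψ : IsNormalized ψ)
    (hcont : ContinuousOn ψ (sphere (0 : ℂ) 1)) (hinj : InjOn ψ (sphere (0 : ℂ) 1)) (a : ℝ) :
    ∃ F : ℝ → ℝ, ∃ α : ℝ,
      (StrictMonoOn F (Icc a (a + 2 * π / 3)) ∨ StrictAntiOn F (Icc a (a + 2 * π / 3))) ∧
      MapsTo F (Icc a (a + 2 * π / 3)) (Icc α (α + 4 * π / 3)) ∧
      ∀ t ∈ Icc a (a + 2 * π / 3), cexp (F t * I) = ψ (cexp (t * I)) := by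
  have hpi := pi_pos
  obtain ⟨α, hα⟩ := hψ a
  have hcont' : ContinuousOn (fun t : ℝ => ψ (cexp (t * I))) (Icc a (a + 2 * π / 3)) :=
    hcont.comp (by fun_prop) fun t _ => exp_mul_I_mem_sphere t
  obtain ⟨F, hFcont, hFmaps, hF⟩ := exists_continuousOn_lift_of_mapsTo_arcCC (by linarith)
    hcont' fun t ht => hα ⟨_, ⟨t, ht, rfl⟩, rfl⟩
  have hFinj : InjOn F (Icc a (a + 2 * π / 3)) := fun s hs t ht hst =>
    exp_mul_I_injOn_Icc (by linarith) hs ht <|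
      hinj (exp_mul_I_mem_sphere s) (exp_mul_I_mem_sphere t) (by rw [← hF s hs, ← hF t ht, hst])
  exact ⟨F, α, hFcont.strictMonoOn_of_injOn_Icc' (by linarith) hFinj, hFmaps, hF⟩

lemma exists_lift_sub_eq_of_arcCC_subset_image {ψ : ℂ → ℂ} {F : ℝ → ℝ} {a b α L β δ : ℝ}
    (hδ : 0 ≤ δ) (hLδ : L + δ < 2 * π) (hFmaps : MapsTo F (Icc a b) (Icc α (α + L)))
    (hF : ∀ t ∈ Icc a b, cexp (F t * I) = ψ (cexp (t * I)))
    (hsub : arcCC β (β + δ) ⊆ ψ '' arcCC a b) :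
    ∃ u ∈ Icc a b, ∃ v ∈ Icc a b, F v = F u + δ := by
  obtain ⟨_, ⟨u, hu, rfl⟩, hψu⟩ := hsub ⟨β, ⟨le_rfl, by linarith⟩, rfl⟩
  obtain ⟨_, ⟨v, hv, rfl⟩, hψv⟩ := hsub ⟨β + δ, ⟨by linarith, le_rfl⟩, rfl⟩
  refine ⟨u, hu, v, hv, ?_⟩
  have hFu := hFmaps hu
  have hFv := hFmaps hv
  refine exp_mul_I_injOn_Icc (a := α) (b := α + L + δ) (by linarith) ⟨by linarith [hFv.1],
    by linarith [hFv.2]⟩ ⟨by linarith [hFu.1], by linarith [hFu.2]⟩ ?_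
  simp only [hF v hv, hψv, ofReal_add, add_mul, Complex.exp_add, ← hψu, hF u hu]

/-- Let `ψ` be a normalized circle homeomorphism and `σ = {e^{it} : |t − θ| ≤ π/6}` an
arc of length `π/3` whose image `ψ(σ)` has length at least `π/3` (equivalently, contains
an arc of length `π/3`).  With `z₀ = e^{−π/6}e^{iθ}` (so `δ = π/6`) and the associated
arcs `γ₁ = {e^{it} : θ−π/3 ≤ t ≤ θ−π/6}`, `γ₄ = {e^{it} : θ+π/6 ≤ t ≤ θ+π/3}`,
one has `dist(ψ(γ₁), ψ(γ₄)) ≥ 1`. -/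
theorem dist_images_ge_one (ψ : ℂ → ℂ)
    (hcont : ContinuousOn ψ (sphere (0:ℂ) 1))
    (hbij : BijOn ψ (sphere (0:ℂ) 1) (sphere (0:ℂ) 1))
    (hnorm : IsNormalized ψ) (θ : ℝ)
    (hσ : ∃ θ'' : ℝ, arcCC θ'' (θ'' + π / 3) ⊆ ψ '' arcCC (θ - π / 6) (θ + π / 6)) :
    1 ≤ setDist (ψ '' arcCC (θ - π / 3) (θ - π / 6))
        (ψ '' arcCC (θ + π / 6) (θ + π / 3)) := by
  have hpi := pi_pos
  obtain ⟨F, α, hFmono, hFmaps, hF⟩ := hnorm.exists_strictMonoOn_lift hcont hbij.injOn (θ - π / 3)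
  rw [show θ - π / 3 + 2 * π / 3 = θ + π / 3 by ring] at hFmono hFmaps hF
  have hσI : Icc (θ - π / 6) (θ + π / 6) ⊆ Icc (θ - π / 3) (θ + π / 3) :=
    Icc_subset_Icc (by linarith) (by linarith)
  obtain ⟨θ'', hθ''⟩ := hσ
  obtain ⟨u, hu, v, hv, huv⟩ := exists_lift_sub_eq_of_arcCC_subset_image (by positivity)
    (by linarith) (hFmaps.mono_left hσI) (fun t ht => hF t (hσI ht)) hθ''
  refine le_setDist ((nonempty_Icc.2 (by linarith)).image _ |>.image ψ)
    ((nonempty_Icc.2 (by linarith)).image _ |>.image ψ) ?_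
  rintro _ ⟨_, ⟨s, hs, rfl⟩, rfl⟩ _ ⟨_, ⟨t, ht, rfl⟩, rfl⟩
  have hsI : s ∈ Icc (θ - π / 3) (θ + π / 3) := ⟨hs.1, by linarith [hs.2]⟩
  have htI : t ∈ Icc (θ - π / 3) (θ + π / 3) := ⟨by linarith [ht.1], ht.2⟩
  rw [← hF s hsI, ← hF t htI, dist_exp_mul_I_exp_mul_I]
  refine one_le_two_mul_abs_sin_half ?_ ?_
  · calc π / 3 = |F v - F u| := by rw [huv, add_sub_cancel_left, abs_of_pos (by positivity)]
      _ ≤ |F s - F t| := abs_sub_le_abs_sub_of_monotoneOn_or_antitoneOn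
          (hFmono.imp StrictMonoOn.monotoneOn StrictAntiOn.antitoneOn) hsI htI (hσI hv) (hσI hu)
          (by linarith [hs.2, hv.1]) (by linarith [hs.2, hu.1]) (by linarith [ht.1, hv.2])
          (by linarith [ht.1, hu.2])
  · have hFs := hFmaps hsI
    have hFt := hFmaps htI
    exact abs_le.2 ⟨by linarith [hFs.1, hFt.2], by linarith [hFs.2, hFt.1]⟩
end
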